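/- arXiv:2001.06775 — 5 statements merged into one kernel-verified Lean document; each statement's English description precedes it below -/
import Mathlib

section
/- For every r ≥ 2 and every positive integer m, there exists a graph G with γ_r(G) = 1 and ω_r(G) ≥ m; that is, the gap between ω_r and γ_r can be arbitrarily large. -/
open SimpleGraph Finset CategoryTheory AlgebraicTopology

variable {V : Type} [Fintype V] [DecidableEq V]

/-- A finset `A` is `r`-independent in `G` if every connected component of the
induced subgraph `G[A]` has at most `r` vertices. -/
def IsRIndep (G : SimpleGraph V) (r : ℕ) (A : Finset V) : Prop :=
  ∀ (v : V) (hv : v ∈ A),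
    Set.ncard {w : (A : Set V) | (G.induce (A : Set V)).Reachable ⟨v, hv⟩ w} ≤ r

/-- The `r`-independence complex of `G`, as the set of its faces. -/
def IndCompl (G : SimpleGraph V) (r : ℕ) : Set (Finset V) := {A | IsRIndep G r A}

/-- The `r`-independence complex of the induced subgraph of `G` on `W`. -/
def IndComplOn (G : SimpleGraph V) (r : ℕ) (W : Set V) : Set (Finset V) :=
  {A | ↑A ⊆ W ∧ IsRIndep G r A}

/-- The star of a face in a complex. -/
def starCl (K : Set (Finset V)) (σ : Finset V) : Set (Finset V) := {τ ∈ K | σ ∪ τ ∈ K}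

/-- Join of two simplicial complexes (on disjoint vertex sets). -/
def joinCl (K L : Set (Finset V)) : Set (Finset V) := {A | ∃ σ ∈ K, ∃ τ ∈ L, A = σ ∪ τ}

/-- The set of `r`-supports of a vertex `v` in `G`. -/
def Supp (G : SimpleGraph V) (r : ℕ) (v : V) : Set (Finset V) :=
  {S | v ∉ S ∧ S.card = r ∧ (G.induce (insert v ↑S : Set V)).Connected}

/-- Closed neighborhood of a set of vertices. -/
def closedNbhd (G : SimpleGraph V) (S : Set V) : Set V := S ∪ {w | ∃ s ∈ S, G.Adj w s}

/-- Geometric realization of a complex on the finite vertex set `V`. -/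
def realization (K : Set (Finset V)) : Type :=
  {f : V → ℝ // (∀ v, 0 ≤ f v) ∧ (∑ v, f v = 1) ∧ ∃ σ ∈ K, ∀ v, f v ≠ 0 → v ∈ σ}

instance (K : Set (Finset V)) : TopologicalSpace (realization K) := by
  delta realization; infer_instance

def sphereT (n : ℕ) : Type := Metric.sphere (0 : EuclideanSpace ℝ (Fin (n + 1))) 1

noncomputable instance (n : ℕ) : TopologicalSpace (sphereT n) := by
  delta sphereT; infer_instance

noncomputable def spherePt (n : ℕ) : sphereT n :=
  ⟨EuclideanSpace.single 0 1, by simp⟩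

/-- Wedge sum of a family of pointed spaces. -/
def Wedge {ι : Type} (X : ι → Type) [∀ i, TopologicalSpace (X i)] (pt : ∀ i, X i) : Type :=
  Quot (fun a b : Σ i, X i => a.2 = pt a.1 ∧ b.2 = pt b.1)

instance {ι : Type} (X : ι → Type) [∀ i, TopologicalSpace (X i)] (pt : ∀ i, X i) :
    TopologicalSpace (Wedge X pt) := by delta Wedge; infer_instance

/-- Distance `r`-dominating set. -/
def IsDistDomSet (G : SimpleGraph V) (r : ℕ) (D : Finset V) : Prop :=
  ∀ v : V, ∃ d ∈ D, G.Reachable v d ∧ G.dist v d ≤ r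

/-- Distance `r`-domination number `γ_r(G)`. -/
noncomputable def gammaR (G : SimpleGraph V) (r : ℕ) : ℕ :=
  sInf {n | ∃ D : Finset V, IsDistDomSet G r D ∧ D.card = n}

/-- Dominating `r`-collection. -/
def IsDomRColl (G : SimpleGraph V) (r : ℕ) (F : Finset (Finset V)) : Prop :=
  (∀ S ∈ F, (G.induce (S : Set V)).Connected ∧ S.card ≤ r) ∧
  ∀ v : V, ∃ S ∈ F, v ∈ S ∨ ∃ s ∈ S, G.Adj v s

/-- `r`-set domination number `ω_r(G)`. -/
noncomputable def omegaR (G : SimpleGraph V) (r : ℕ) : ℕ :=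
  sInf {n | ∃ F : Finset (Finset V), IsDomRColl G r F ∧ F.card = n}

/-- Singular homology functor with integer coefficients. -/
noncomputable def singularHomologyF (n : ℕ) : TopCat.{0} ⥤ ModuleCat ℤ :=
  TopCat.toSSet ⋙ ((SimplicialObject.whiskering _ _).obj (ModuleCat.free ℤ)) ⋙
    alternatingFaceMapComplex (ModuleCat ℤ) ⋙ HomologicalComplex.homologyFunctor _ _ n

/-- Vanishing of reduced singular homology `H̃_n(X;ℤ)`, expressed as injectivity of the
map induced on homology by the map to a point. -/
def RedHomVanish (X : Type) [TopologicalSpace X] (n : ℕ) : Prop :=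
  Function.Injective ((singularHomologyF n).map
    (X := TopCat.of X) (Y := TopCat.of PUnit) (TopCat.ofHom (ContinuousMap.const X PUnit.unit)))

/-- Chordality: every cycle of length at least 4 has a chord. -/
def IsChordal (G : SimpleGraph V) : Prop :=
  ∀ (v : V) (w : G.Walk v v), w.IsCycle → 4 ≤ w.length →
    ∃ x y, x ∈ w.support ∧ y ∈ w.support ∧ G.Adj x y ∧ s(x, y) ∉ w.edges

/-- Unreduced suspension (with the convention `Susp ∅ = S⁰`). -/
def Susp (X : Type) [TopologicalSpace X] : Type :=
  Quot (fun a b : X × unitInterval ⊕ Bool => match a, b with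
    | .inl (_, t), .inr s => (t = 0 ∧ s = false) ∨ (t = 1 ∧ s = true)
    | _, _ => False)

instance (X : Type) [TopologicalSpace X] : TopologicalSpace (Susp X) := by
  delta Susp; infer_instance

def SuspObj (X : TopCat.{0}) : TopCat.{0} := TopCat.of (Susp X)

/-- `r`-fold suspension. -/
def SuspIter (n : ℕ) (X : TopCat.{0}) : TopCat.{0} := SuspObj^[n] X

def north (X : TopCat.{0}) : Susp X := Quot.mk _ (Sum.inr true)

def northIter : (n : ℕ) → (X : TopCat.{0}) → SuspIter (n + 1) X
  | 0, X => north X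
  | n + 1, X => northIter n (SuspObj X)

/-- Base point of an iterated suspension (at least one suspension). -/
def northIter' (n : ℕ) (_ : 0 < n) (X : TopCat.{0}) : SuspIter n X :=
  match n with
  | m + 1 => northIter m X

/-!
The spider with `m` legs of `r` vertices has its centre within distance `r` of every vertex, so
`γ_r = 1`. Let `φᵢ` be the height above the centre, counted positively on leg `i` and negatively
elsewhere; it changes by at most one along an edge. A connected set of at most `r` vertices
therefore dominates only vertices whose `φᵢ`-values differ by at most `r + 1`, while the tips of
legs `i ≠ j` have `φᵢ`-values `r` and `-r`. As `2r > r + 1`, every member of a dominating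
`r`-collection dominates at most one of the `m` tips, so `ω_r ≥ m`.
-/

namespace SimpleGraph

variable {α : Type} {G : SimpleGraph α}

theorem Walk.abs_sub_le_length {f : α → ℤ} (hf : ∀ u v, G.Adj u v → |f u - f v| ≤ 1)
    {u v : α} (p : G.Walk u v) : |f u - f v| ≤ p.length := by
  induction p with
  | nil => simp
  | @cons a b c h p ih =>
    rw [Walk.length_cons, Nat.cast_succ]
    linarith [abs_sub_le (f a) (f b) (f c), hf a b h]

theorem exists_walk_length_lt_card {s : Finset α} (hs : (G.induce (s : Set α)).Connected)
    {u v : α} (hu : u ∈ s) (hv : v ∈ s) : ∃ p : G.Walk u v, p.length < s.card := by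
  obtain ⟨p, hp⟩ := (hs.preconnected ⟨u, hu⟩ ⟨v, hv⟩).exists_isPath
  exact ⟨p.map (Embedding.induce _).toHom,
    (Walk.length_map _ _).trans_lt (by simpa using hp.length_lt)⟩

theorem exists_mem_abs_sub_le_of_mem_closedNbhd {f : α → ℤ}
    (hf : ∀ u v, G.Adj u v → |f u - f v| ≤ 1) {s : Set α} {x : α} (hx : x ∈ closedNbhd G s) :
    ∃ y ∈ s, |f x - f y| ≤ 1 := by
  rcases hx with hx | ⟨y, hy, hxy⟩
  · exact ⟨x, hx, by simp⟩
  · exact ⟨y, hy, hf x y hxy⟩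

theorem abs_sub_lt_of_mem_closedNbhd {f : α → ℤ} (hf : ∀ u v, G.Adj u v → |f u - f v| ≤ 1)
    {s : Finset α} (hs : (G.induce (s : Set α)).Connected) {x y : α}
    (hx : x ∈ closedNbhd G s) (hy : y ∈ closedNbhd G s) : |f x - f y| < s.card + 2 := by
  obtain ⟨x', hx', hxx'⟩ := exists_mem_abs_sub_le_of_mem_closedNbhd hf hx
  obtain ⟨y', hy', hyy'⟩ := exists_mem_abs_sub_le_of_mem_closedNbhd hf hy
  obtain ⟨p, hp⟩ := exists_walk_length_lt_card hs hx' hy'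
  have hpath := p.abs_sub_le_length hf
  have hlen : (p.length : ℤ) < s.card := by exact_mod_cast hp
  linarith [abs_sub_le (f x) (f x') (f y), abs_sub_le (f x') (f y') (f y),
    abs_sub_comm (f y) (f y')]

end SimpleGraph

section Domination

variable {α : Type} {G : SimpleGraph α} {r : ℕ}

theorem gammaR_eq_one_of_forall_dist_le (c : α) (hc : ∀ v, G.Reachable v c ∧ G.dist v c ≤ r) :
    gammaR G r = 1 := by
  have hone : 1 ∈ {n | ∃ D : Finset α, IsDistDomSet G r D ∧ D.card = n} :=
    ⟨{c}, fun v => ⟨c, mem_singleton_self c, hc v⟩, card_singleton c⟩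
  refine le_antisymm (Nat.sInf_le hone) (Nat.one_le_iff_ne_zero.2 fun h => ?_)
  rcases Nat.sInf_eq_zero.1 h with ⟨D, hD, hD0⟩ | hempty
  · obtain ⟨d, hd, -⟩ := hD c
    simp [card_eq_zero.1 hD0] at hd
  · simp [hempty] at hone

theorem isDomRColl_singletons [Fintype α] [DecidableEq α] (hr : 1 ≤ r) :
    IsDomRColl G r (univ.image singleton) := by
  refine ⟨?_, fun v => ⟨{v}, mem_image_of_mem _ (mem_univ v), Or.inl (mem_singleton_self v)⟩⟩
  simp only [mem_image, mem_univ, true_and, forall_exists_index, forall_apply_eq_imp_iff]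
  intro v
  rw [coe_singleton, induce_singleton_eq_top, card_singleton]
  exact ⟨connected_top, hr⟩

theorem card_le_omegaR [Fintype α] [DecidableEq α] {ι : Type} [Fintype ι] (hr : 1 ≤ r)
    (t : ι → α) (hsep : ∀ s : Finset α, (G.induce (s : Set α)).Connected → s.card ≤ r →
      ∀ i j, t i ∈ closedNbhd G s → t j ∈ closedNbhd G s → i = j) :
    Fintype.card ι ≤ omegaR G r := by
  refine le_csInf ⟨_, _, isDomRColl_singletons hr, rfl⟩ ?_
  rintro _ ⟨F, ⟨hconn, hdom⟩, rfl⟩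
  choose S hSF hS using fun i => hdom (t i)
  refine (Fintype.card_le_of_injective (fun i => (⟨S i, hSF i⟩ : F)) fun i j hij => ?_).trans_eq
    (Fintype.card_coe F)
  have hSij : S i = S j := congrArg Subtype.val hij
  exact hsep (S i) (hconn _ (hSF i)).1 (hconn _ (hSF i)).2 i j (hS i) (hSij ▸ hS j)

end Domination

section Spider

variable {m r : ℕ}

/-- The spider with `m` legs of `r` vertices each: centre `none`, and leg `i` is the path
`some (i, 0) - some (i, 1) - ⋯ - some (i, r - 1)` attached to the centre at `some (i, 0)`. -/
def spider (m r : ℕ) : SimpleGraph (Option (Fin m × Fin r)) :=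
  SimpleGraph.fromRel fun
    | none, some (_, j) => (j : ℕ) = 0
    | some (i, j), some (i', j') => i = i' ∧ (j : ℕ) + 1 = j'
    | _, _ => False

theorem spider_adj_none (i : Fin m) (hr : 0 < r) : (spider m r).Adj (some (i, ⟨0, hr⟩)) none :=
  (fromRel_adj _ _ _).2 ⟨by simp, Or.inr rfl⟩

theorem spider_adj_succ (i : Fin m) (j : ℕ) (hj : j + 1 < r) :
    (spider m r).Adj (some (i, ⟨j + 1, hj⟩)) (some (i, ⟨j, Nat.lt_of_succ_lt hj⟩)) :=
  (fromRel_adj _ _ _).2 ⟨by simp, Or.inr ⟨rfl, rfl⟩⟩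

theorem spider_exists_walk_to_centre (i : Fin m) (j : ℕ) (hj : j < r) :
    ∃ p : (spider m r).Walk (some (i, ⟨j, hj⟩)) none, p.length = j + 1 := by
  induction j with
  | zero => exact ⟨Walk.cons (spider_adj_none i hj) Walk.nil, rfl⟩
  | succ j ih =>
    obtain ⟨p, hp⟩ := ih (Nat.lt_of_succ_lt hj)
    exact ⟨Walk.cons (spider_adj_succ i j hj) p, by rw [Walk.length_cons, hp]⟩

theorem gammaR_spider (m r : ℕ) : gammaR (spider m r) r = 1 := by
  refine gammaR_eq_one_of_forall_dist_le none ?_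
  rintro (_ | ⟨i, j, hj⟩)
  · simp
  · obtain ⟨p, hp⟩ := spider_exists_walk_to_centre i j hj
    exact ⟨p.reachable, (dist_le p).trans (by omega)⟩

def legPotential (i : Fin m) : Option (Fin m × Fin r) → ℤ
  | none => 0
  | some (k, j) => if k = i then j + 1 else -(j + 1)

theorem abs_legPotential_sub_le (i : Fin m) (u v : Option (Fin m × Fin r))
    (h : (spider m r).Adj u v) : |legPotential i u - legPotential i v| ≤ 1 := by
  rw [spider, fromRel_adj] at h
  obtain ⟨-, h⟩ := h
  rcases u with _ | ⟨k, j⟩ <;> rcases v with _ | ⟨k', j'⟩ <;>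
    simp only [legPotential, or_false, false_or, or_self] at h ⊢
  · rw [abs_le]; split_ifs <;> omega
  · rw [abs_le]; split_ifs <;> omega
  · rcases h with ⟨rfl, h⟩ | ⟨rfl, h⟩ <;> rw [abs_le] <;> split_ifs <;> omega

theorem spider_tip_eq_of_mem_closedNbhd {n : ℕ} (hn : 1 ≤ n)
    {s : Finset (Option (Fin m × Fin (n + 1)))}
    (hs : ((spider m (n + 1)).induce (s : Set _)).Connected) (hcard : s.card ≤ n + 1)
    {i j : Fin m}
    (hi : some (i, Fin.last n) ∈ closedNbhd (spider m (n + 1)) s)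
    (hj : some (j, Fin.last n) ∈ closedNbhd (spider m (n + 1)) s) : i = j := by
  by_contra hij
  have hlt := abs_sub_lt_of_mem_closedNbhd (abs_legPotential_sub_le i) hs hi hj
  simp only [legPotential, if_pos, if_neg (Ne.symm hij), Fin.val_last] at hlt
  rw [abs_lt] at hlt
  omega

theorem le_omegaR_spider (hr : 2 ≤ r) : m ≤ omegaR (spider m r) r := by
  obtain ⟨n, rfl⟩ : ∃ n, r = n + 1 := ⟨r - 1, by omega⟩
  simpa using card_le_omegaR (by omega) (fun i : Fin m => some (i, Fin.last n))
    fun s hs hcard _ _ => spider_tip_eq_of_mem_closedNbhd (by omega) hs hcard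

end Spider

theorem omegaR_gammaR_gap_general (r : ℕ) (hr : 2 ≤ r) (m : ℕ) :
    ∃ (V : Type) (_ : Fintype V) (_ : DecidableEq V) (G : SimpleGraph V),
      gammaR G r = 1 ∧ m ≤ omegaR G r :=
  ⟨_, inferInstance, inferInstance, spider m r, gammaR_spider m r, le_omegaR_spider hr⟩

/-- the gap between `ω_r` and `γ_r` can be arbitrarily large. -/
theorem omegaR_gammaR_gap (r : ℕ) (hr : 2 ≤ r) (m : ℕ) (hm : 0 < m) :
    ∃ (V : Type) (_ : Fintype V) (_ : DecidableEq V) (G : SimpleGraph V),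
      gammaR G r = 1 ∧ m ≤ omegaR G r :=
  omegaR_gammaR_gap_general r hr m
end

section
/- For any graph G, any vertex v of G, and any r ≥ 1, the r-independence complex of G equals the union of the star of v with the stars of all r-supports of v: Ind_r(G) = st(v) ∪ ⋃_{S ∈ Supp_r(v,G)} st(S). -/
open SimpleGraph Finset CategoryTheory AlgebraicTopology

variable {V : Type} [Fintype V] [DecidableEq V]

/-! If `A` is `r`-independent but `A ∪ {v}` is not, some connected set `C ⊆ A ∪ {v}` with more
than `r` vertices must contain `v`. Growing a connected set from `v` inside `C` gives a connected
`(r + 1)`-set `T ∋ v`; then `T \ {v}` is an `r`-support of `v` contained in `A`, so its star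
contains `A`. -/

namespace SimpleGraph

lemma connected_induce_singleton {W : Type*} (G : SimpleGraph W) (w : W) :
    (G.induce {w}).Connected := by
  rw [induce_singleton_eq_top]
  exact connected_top

lemma connected_induce_image_val {W : Type*} (G : SimpleGraph W) {s : Set W} {t : Set s}
    (h : ((G.induce s).induce t).Connected) : (G.induce (Subtype.val '' t)).Connected :=
  h.map
    { toFun := fun x => ⟨x.1.1, Set.mem_image_of_mem _ x.2⟩
      map_rel' := fun hxy => by simpa using hxy }
    (by rintro ⟨_, x, hx, rfl⟩; exact ⟨⟨x, hx⟩, rfl⟩)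

lemma exists_connected_subset_card {W : Type*} [DecidableEq W] (G : SimpleGraph W)
    {C : Finset W} (hC : (G.induce (C : Set W)).Connected) {v : W} (hv : v ∈ C)
    {k : ℕ} (hk₁ : 1 ≤ k) (hk : k ≤ C.card) :
    ∃ T ⊆ C, v ∈ T ∧ T.card = k ∧ (G.induce (T : Set W)).Connected := by
  induction k, hk₁ using Nat.le_induction with
  | base =>
    refine ⟨{v}, by simpa, by simp, by simp, ?_⟩
    rw [coe_singleton]
    exact G.connected_induce_singleton v
  | succ k _ ih =>
    obtain ⟨T, hTC, hvT, rfl, hT⟩ := ih (by omega)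
    obtain ⟨u, huC, huT⟩ := exists_mem_notMem_of_card_lt_card (by omega : T.card < C.card)
    obtain ⟨p⟩ := hC.preconnected ⟨v, hv⟩ ⟨u, huC⟩
    obtain ⟨d, -, hdT, hdT'⟩ := p.exists_boundary_dart {x | x.1 ∈ T} hvT huT
    refine ⟨insert d.snd.1 T, insert_subset d.snd.2 hTC, mem_insert_of_mem hvT,
      card_insert_of_notMem hdT', ?_⟩
    rw [coe_insert, Set.insert_eq]
    exact G.connected_induce_union (G.connected_induce_singleton _).preconnected
      hT.preconnected rfl hdT (by simpa using d.adj.symm)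

end SimpleGraph

omit [DecidableEq V] in
lemma isRIndep_iff {G : SimpleGraph V} {r : ℕ} {A : Finset V} :
    IsRIndep G r A ↔ ∀ C ⊆ A, (G.induce (C : Set V)).Connected → C.card ≤ r := by
  constructor
  · intro hA C hCA hC
    obtain ⟨⟨c, hc⟩⟩ := hC.nonempty
    have hsub : (C : Set V) ⊆ Subtype.val ''
        {w : (A : Set V) | (G.induce (A : Set V)).Reachable ⟨c, hCA hc⟩ w} := fun w hw =>
      ⟨⟨w, hCA hw⟩,
        (hC.preconnected ⟨c, hc⟩ ⟨w, hw⟩).map (G.induceHomOfLE (coe_subset.2 hCA)).toHom, rfl⟩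
    calc C.card = (C : Set V).ncard := (Set.ncard_coe_finset C).symm
      _ ≤ _ := Set.ncard_le_ncard hsub (Set.toFinite _)
      _ = _ := Set.ncard_image_of_injective _ Subtype.val_injective
      _ ≤ r := hA c (hCA hc)
  · intro h u hu
    set c := (G.induce (A : Set V)).connectedComponentMk ⟨u, hu⟩
    have hsupp : {w | (G.induce (A : Set V)).Reachable ⟨u, hu⟩ w} = c.supp :=
      Set.ext fun _ => (ConnectedComponent.eq.trans reachable_comm).symm
    rw [hsupp, ← Set.ncard_image_of_injective _ Subtype.val_injective,
      Set.ncard_eq_toFinset_card _]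
    refine h _ (fun w hw => ?_) ?_
    · obtain ⟨x, -, rfl⟩ := (Set.Finite.mem_toFinset _).1 hw
      exact x.2
    · rw [Set.Finite.coe_toFinset]
      exact G.connected_induce_image_val c.connected_toSimpleGraph

lemma exists_supp_subset_of_not_isRIndep_insert {G : SimpleGraph V} {r : ℕ} {A : Finset V}
    {v : V} (hA : IsRIndep G r A) (hvA : ¬IsRIndep G r (insert v A)) :
    ∃ S ∈ Supp G r v, S ⊆ A := by
  obtain ⟨C, hCA, hC, hCr⟩ : ∃ C ⊆ insert v A, (G.induce (C : Set V)).Connected ∧ r < C.card := by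
    simpa [isRIndep_iff] using hvA
  have hvC : v ∈ C := by
    by_contra hvC
    exact (isRIndep_iff.1 hA C ((subset_insert_iff_of_notMem hvC).1 hCA) hC).not_gt hCr
  obtain ⟨T, hTC, hvT, hTcard, hT⟩ :=
    G.exists_connected_subset_card hC hvC (Nat.le_add_left 1 r) hCr
  refine ⟨T.erase v, ⟨notMem_erase v T, by simp [card_erase_of_mem hvT, hTcard], ?_⟩,
    subset_insert_iff.1 (hTC.trans hCA)⟩
  rwa [← coe_insert, insert_erase hvT]

theorem indCompl_eq_star_union_general (G : SimpleGraph V) (r : ℕ) (v : V) :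
    IndCompl G r =
      starCl (IndCompl G r) {v} ∪ ⋃ S ∈ Supp G r v, starCl (IndCompl G r) S := by
  ext A
  simp only [Set.mem_union, Set.mem_iUnion, exists_prop]
  refine ⟨fun hA => ?_, ?_⟩
  · by_cases hvA : {v} ∪ A ∈ IndCompl G r
    · exact Or.inl ⟨hA, hvA⟩
    · obtain ⟨S, hS, hSA⟩ := exists_supp_subset_of_not_isRIndep_insert hA (by rwa [insert_eq])
      exact Or.inr ⟨S, hS, hA, by rwa [union_eq_right.2 hSA]⟩
  · rintro (hA | ⟨S, -, hA⟩) <;> exact hA.1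

/-- `Ind_r(G) = st(v) ∪ ⋃_{S ∈ Supp_r(v,G)} st(S)`. -/
theorem indCompl_eq_star_union (G : SimpleGraph V) (r : ℕ) (hr : 1 ≤ r) (v : V) :
    IndCompl G r =
      starCl (IndCompl G r) {v} ∪ ⋃ S ∈ Supp G r v, starCl (IndCompl G r) S :=
  indCompl_eq_star_union_general G r v
end

section
/- If v is a simplicial vertex of a graph G (i.e., G[N(v)] is complete), then for every r-support S of v, the induced subgraph G[S] is connected and N(v) ⊆ N[S]. -/
open SimpleGraph Finset CategoryTheory AlgebraicTopology

variable {V : Type} [Fintype V] [DecidableEq V]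

/-!
Since `G[S ∪ {v}]` is connected and `S` is nonempty, `v` has a neighbour `c ∈ S`. Sending `v` to
`c` projects walks of `G[S ∪ {v}]` into `G[S]`: as `N(v)` is a clique, an edge `v – w` becomes an
edge `c – w` or collapses to `c`. The same clique property puts every neighbour of `v` in `N[S]`.
-/

theorem SimpleGraph.Reachable.map_of_adj_reachable {α β : Type*} {G : SimpleGraph α}
    {H : SimpleGraph β} (f : α → β) (hf : ∀ ⦃x y⦄, G.Adj x y → H.Reachable (f x) (f y))
    {x y : α} (h : G.Reachable x y) : H.Reachable (f x) (f y) := by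
  rw [reachable_iff_reflTransGen] at h ⊢
  exact Relation.ReflTransGen.lift' f
    (fun _ _ hab => (H.reachable_iff_reflTransGen _ _).1 (hf hab)) _ _ h

theorem SimpleGraph.IsClique.eq_or_adj {α : Type*} {G : SimpleGraph α} {s : Set α}
    (hs : G.IsClique s) {a b : α} (ha : a ∈ s) (hb : b ∈ s) : a = b ∨ G.Adj a b := by
  by_cases hab : a = b
  · exact Or.inl hab
  · exact Or.inr (hs ha hb hab)

theorem SimpleGraph.exists_adj_of_preconnected_induce_insert {α : Type*} {G : SimpleGraph α}
    {v : α} {s : Set α} (h : (G.induce (insert v s)).Preconnected) (hvs : v ∉ s)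
    (hs : s.Nonempty) : ∃ c ∈ s, G.Adj v c := by
  obtain ⟨x, hx⟩ := hs
  obtain ⟨p⟩ := h ⟨v, Set.mem_insert v s⟩ ⟨x, Set.mem_insert_of_mem v hx⟩
  obtain ⟨d, -, hfst, hsnd⟩ :=
    p.exists_boundary_dart {⟨v, Set.mem_insert v s⟩} rfl
      (fun hxv => hvs (Subtype.mk.inj (Set.mem_singleton_iff.1 hxv) ▸ hx))
  have hd : G.Adj v d.snd := by simpa [Set.mem_singleton_iff.1 hfst] using d.adj
  exact ⟨d.snd, d.snd.2.resolve_left (fun h => hsnd (Subtype.ext h)), hd⟩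

theorem SimpleGraph.Preconnected.induce_of_induce_insert {α : Type*} {G : SimpleGraph α}
    {v c : α} {s : Set α} (hv : G.IsClique (G.neighborSet v)) (hvs : v ∉ s) (hc : c ∈ s)
    (hvc : G.Adj v c) (h : (G.induce (insert v s)).Preconnected) :
    (G.induce s).Preconnected := by
  classical
  let f : ↥(insert v s) → ↥s := fun x => if hx : x.1 ∈ s then ⟨x, hx⟩ else ⟨c, hc⟩
  have hc_reach : ∀ y : s, G.Adj v y → (G.induce s).Reachable ⟨c, hc⟩ y := by
    intro y hvy
    rcases hv.eq_or_adj hvc hvy with hcy | hcy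
    · exact (Subtype.ext hcy : (⟨c, hc⟩ : s) = y) ▸ Reachable.refl _
    · exact Adj.reachable hcy
  have hf : ∀ ⦃x y⦄, (G.induce (insert v s)).Adj x y → (G.induce s).Reachable (f x) (f y) := by
    rintro ⟨x, hx⟩ ⟨y, hy⟩ hxy
    have hxy : G.Adj x y := hxy
    by_cases hxs : x ∈ s <;> by_cases hys : y ∈ s
    · simpa [f, hxs, hys] using (show (G.induce s).Adj ⟨x, hxs⟩ ⟨y, hys⟩ from hxy).reachable
    · obtain rfl := hy.resolve_right hys
      simpa [f, hxs, hys] using (hc_reach ⟨x, hxs⟩ hxy.symm).symm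
    · obtain rfl := hx.resolve_right hxs
      simpa [f, hxs, hys] using hc_reach ⟨y, hys⟩ hxy
    · exact (G.ne_of_adj hxy ((hx.resolve_right hxs).trans (hy.resolve_right hys).symm)).elim
  intro x y
  simpa [f] using (h ⟨x, Set.mem_insert_of_mem v x.2⟩ ⟨y, Set.mem_insert_of_mem v y.2⟩)
    |>.map_of_adj_reachable f hf

/-- if `v` is simplicial then every `r`-support `S` of `v` induces a
connected subgraph and `N(v) ⊆ N[S]`. -/
theorem simplicial_vertex_support (G : SimpleGraph V) (r : ℕ) (hr : 1 ≤ r) (v : V)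
    (hv : ∀ a ∈ G.neighborSet v, ∀ b ∈ G.neighborSet v, a ≠ b → G.Adj a b)
    (S : Finset V) (hS : S ∈ Supp G r v) :
    (G.induce (S : Set V)).Connected ∧ G.neighborSet v ⊆ closedNbhd G ↑S := by
  obtain ⟨hvS, hcard, hconn⟩ := hS
  have hv : G.IsClique (G.neighborSet v) := hv
  have hvS : v ∉ (S : Set V) := hvS
  have hne : (S : Set V).Nonempty := by
    rw [coe_nonempty, ← card_pos, hcard]
    omega
  obtain ⟨c, hcS, hvc⟩ := exists_adj_of_preconnected_induce_insert hconn.preconnected hvS hne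
  refine ⟨(connected_iff _).2 ⟨hconn.preconnected.induce_of_induce_insert hv hvS hcS hvc,
    hne.to_subtype⟩, fun w hvw => ?_⟩
  by_cases hwS : w ∈ (S : Set V)
  · exact Or.inl hwS
  · exact Or.inr ⟨c, hcS, (hv.eq_or_adj hvw hvc).resolve_left (fun hwc => hwS (hwc ▸ hcS))⟩
end

section
/- Let G be a connected graph, v ∈ V(G), and Supp_r(v,G) = {S_1,…,S_n}. If G[S_i] is connected and N(v) ⊆ N[S_i] for every i, then for all i ≠ j, st(S_i) ∩ st(S_j) ⊆ st(v) in Ind_r(G). -/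
open SimpleGraph Finset CategoryTheory AlgebraicTopology

variable {V : Type} [Fintype V] [DecidableEq V]

/-
The face `S_i ∪ τ` is `r`-independent and `S_i` is a connected `r`-set, so `S_i` is a whole
component of `G[S_i ∪ τ]`: no vertex of `τ` outside `S_i` is adjacent to `S_i`. Since
`N(v) ⊆ N[S_i]`, walking from `v` inside `{v} ∪ τ` therefore never leaves `{v} ∪ S_i`, for
both `i` and `j`. So the component of `v` in `G[{v} ∪ τ]` lies in `{v} ∪ (S_i ∩ S_j)`, which has
at most `r` vertices because `S_i ≠ S_j` have `r` vertices each; every other component of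
`G[{v} ∪ τ]` is a component of `G[τ]`.
-/

theorem SimpleGraph.Reachable.mem_of_forall_adj {W : Type*} {H : SimpleGraph W} {D : Set W}
    {u w : W} (h : H.Reachable u w) (hu : u ∈ D)
    (hD : ∀ a b, H.Reachable u a → a ∈ D → H.Adj a b → b ∈ D) : w ∈ D := by
  rw [reachable_iff_reflTransGen] at h
  induction h with
  | refl => exact hu
  | tail hua hab ih => exact hD _ _ ((reachable_iff_reflTransGen _ _).2 hua) ih hab

theorem Finset.card_inter_lt_of_ne {α : Type*} [DecidableEq α] {s t : Finset α}
    (hst : s.card = t.card) (hne : s ≠ t) : (s ∩ t).card < s.card := by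
  refine card_lt_card (ssubset_iff_subset_ne.2 ⟨inter_subset_left, fun h => hne ?_⟩)
  exact eq_of_subset_of_card_le (inter_eq_left.1 h) hst.ge

section

variable {G : SimpleGraph V} {r : ℕ}

theorem IsRIndep.mem_of_adj {A S : Finset V} (hA : IsRIndep G r A) (hSA : S ⊆ A)
    (hS : (G.induce (S : Set V)).Connected) (hSr : S.card = r) {s z : V} (hs : s ∈ S)
    (hz : z ∈ A) (hsz : G.Adj s z) : z ∈ S := by
  by_contra hzS
  have hsA : s ∈ A := hSA hs
  have hsub : insert z (S : Set V) ⊆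
      Subtype.val '' {w | (G.induce (A : Set V)).Reachable ⟨s, hsA⟩ w} := by
    rintro t (rfl | ht)
    · exact ⟨⟨t, hz⟩, (show (G.induce (A : Set V)).Adj ⟨s, hsA⟩ ⟨t, hz⟩ from hsz).reachable, rfl⟩
    · exact ⟨⟨t, hSA ht⟩, (hS.preconnected ⟨s, hs⟩ ⟨t, ht⟩).map
        (G.induceHomOfLE (coe_subset.2 hSA)).toHom, rfl⟩
  have hcard := Set.ncard_le_ncard hsub (Set.toFinite _)
  rw [Set.ncard_image_of_injective _ Subtype.val_injective, Set.ncard_insert_of_notMem hzS,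
    Set.ncard_coe_finset, hSr] at hcard
  exact absurd (hcard.trans (hA s hsA)) (Nat.not_succ_le_self r)

theorem IsRIndep.eq_or_mem_of_reachable_singleton_union {S τ : Finset V} {v : V}
    (hSτ : IsRIndep G r (S ∪ τ)) (hS : (G.induce (S : Set V)).Connected) (hSr : S.card = r)
    (hN : G.neighborSet v ⊆ closedNbhd G S) {w : (({v} ∪ τ : Finset V) : Set V)}
    (hw : (G.induce (({v} ∪ τ : Finset V) : Set V)).Reachable ⟨v, by simp⟩ w) :
    (w : V) = v ∨ (w : V) ∈ S := by
  refine hw.mem_of_forall_adj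
    (D := {w : (({v} ∪ τ : Finset V) : Set V) | (w : V) = v ∨ (w : V) ∈ S}) (Or.inl rfl) ?_
  rintro ⟨a, _⟩ ⟨b, hb⟩ _ ha hab
  rcases eq_or_ne b v with rfl | hbv
  · exact Or.inl rfl
  have hbτ : b ∈ S ∪ τ := mem_union_right _ (by simpa [hbv] using hb)
  right
  rcases ha with hav | haS
  · obtain rfl : a = v := hav
    rcases hN hab with hbS | ⟨s, hs, hbs⟩
    · exact hbS
    · exact hSτ.mem_of_adj subset_union_left hS hSr hs hbτ hbs.symm
  · exact hSτ.mem_of_adj subset_union_left hS hSr haS hbτ hab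

omit [DecidableEq V] in
theorem IsRIndep.ncard_reachable_le_of_subset {A τ : Finset V} (hτ : IsRIndep G r τ) (hτA : τ ⊆ A)
    {x : V} (hx : x ∈ τ)
    (hC : ∀ w, (G.induce (A : Set V)).Reachable ⟨x, hτA hx⟩ w → (w : V) ∈ τ) :
    {w | (G.induce (A : Set V)).Reachable ⟨x, hτA hx⟩ w}.ncard ≤ r := by
  have hreach : ∀ w, (G.induce (A : Set V)).Reachable ⟨x, hτA hx⟩ w →
      ∃ h : (w : V) ∈ τ, (G.induce (τ : Set V)).Reachable ⟨x, hx⟩ ⟨w, h⟩ := fun w hw =>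
    hw.mem_of_forall_adj (D := {w : (A : Set V) | ∃ h : (w : V) ∈ τ,
      (G.induce (τ : Set V)).Reachable ⟨x, hx⟩ ⟨w, h⟩}) ⟨hx, .rfl⟩ fun _ b hxa ⟨_, hxa'⟩ hab =>
      ⟨hC b (hxa.trans hab.reachable), hxa'.trans (Adj.reachable hab)⟩
  calc _ ≤ (Subtype.val '' {w | (G.induce (τ : Set V)).Reachable ⟨x, hx⟩ w}).ncard := by
        refine Set.ncard_le_ncard_of_injOn Subtype.val (fun w hw => ?_)
          Subtype.val_injective.injOn (Set.toFinite _)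
        obtain ⟨h, hxw⟩ := hreach w hw
        exact ⟨⟨w, h⟩, hxw, rfl⟩
    _ ≤ r := by
        rw [Set.ncard_image_of_injective _ Subtype.val_injective]
        exact hτ x hx

theorem isRIndep_singleton_union {τ S₁ S₂ : Finset V} {v : V} (hτ : IsRIndep G r τ)
    (h₁ : IsRIndep G r (S₁ ∪ τ)) (h₂ : IsRIndep G r (S₂ ∪ τ))
    (hS₁ : (G.induce (S₁ : Set V)).Connected) (hS₂ : (G.induce (S₂ : Set V)).Connected)
    (hS₁r : S₁.card = r) (hS₂r : S₂.card = r) (hne : S₁ ≠ S₂)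
    (hN₁ : G.neighborSet v ⊆ closedNbhd G S₁) (hN₂ : G.neighborSet v ⊆ closedNbhd G S₂) :
    IsRIndep G r ({v} ∪ τ) := by
  intro x hx
  by_cases hxv : (G.induce (({v} ∪ τ : Finset V) : Set V)).Reachable ⟨x, hx⟩ ⟨v, by simp⟩
  · have hsub : ∀ w ∈ {w | (G.induce (({v} ∪ τ : Finset V) : Set V)).Reachable ⟨x, hx⟩ w},
        (w : V) ∈ ((insert v (S₁ ∩ S₂) : Finset V) : Set V) := fun w hw => by
      have hvw := hxv.symm.trans hw
      rcases h₁.eq_or_mem_of_reachable_singleton_union hS₁ hS₁r hN₁ hvw with hw₁ | hw₁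
      · simp [hw₁]
      rcases h₂.eq_or_mem_of_reachable_singleton_union hS₂ hS₂r hN₂ hvw with hw₂ | hw₂
      · simp [hw₂]
      simp [hw₁, hw₂]
    calc _ ≤ (insert v (S₁ ∩ S₂)).card := by
          rw [← Set.ncard_coe_finset]
          exact Set.ncard_le_ncard_of_injOn Subtype.val hsub
            Subtype.val_injective.injOn (Set.toFinite _)
      _ ≤ (S₁ ∩ S₂).card + 1 := card_insert_le _ _
      _ ≤ r := hS₁r ▸ card_inter_lt_of_ne (hS₁r.trans hS₂r.symm) hne
  · have hxτ : x ∈ τ := (mem_union.1 hx).resolve_left fun hxv' => by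
      obtain rfl := mem_singleton.1 hxv'
      exact hxv .rfl
    exact hτ.ncard_reachable_le_of_subset subset_union_right hxτ fun w hw =>
      (mem_union.1 w.2).resolve_left fun hwv =>
        hxv ((show w = ⟨v, by simp⟩ from Subtype.ext (mem_singleton.1 hwv)) ▸ hw)

end

theorem star_inter_star_subset_general (G : SimpleGraph V) (r : ℕ)
    (v : V) (n : ℕ) (S : Fin n → Finset V)
    (hinj : Function.Injective S) (hrange : Supp G r v = Set.range S)
    (hconn : ∀ i, (G.induce (S i : Set V)).Connected)
    (hN : ∀ i, G.neighborSet v ⊆ closedNbhd G ↑(S i)) :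
    ∀ i j : Fin n, i ≠ j →
      starCl (IndCompl G r) (S i) ∩ starCl (IndCompl G r) (S j) ⊆
        starCl (IndCompl G r) {v} := by
  have hcard : ∀ k, (S k).card = r := fun k => (hrange.symm ▸ Set.mem_range_self k).2.1
  rintro i j hij τ ⟨⟨hτ, hi⟩, -, hj⟩
  exact ⟨hτ, isRIndep_singleton_union hτ hi hj (hconn i) (hconn j) (hcard i) (hcard j)
    (hinj.ne hij) (hN i) (hN j)⟩

/-- under the support hypotheses, `st(S_i) ∩ st(S_j) ⊆ st(v)`. -/
theorem star_inter_star_subset (G : SimpleGraph V) (hG : G.Connected) (r : ℕ)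
    (hr : 1 ≤ r) (v : V) (n : ℕ) (S : Fin n → Finset V)
    (hinj : Function.Injective S) (hrange : Supp G r v = Set.range S)
    (hconn : ∀ i, (G.induce (S i : Set V)).Connected)
    (hN : ∀ i, G.neighborSet v ⊆ closedNbhd G ↑(S i)) :
    ∀ i j : Fin n, i ≠ j →
      starCl (IndCompl G r) (S i) ∩ starCl (IndCompl G r) (S j) ⊆
        starCl (IndCompl G r) {v} :=
  star_inter_star_subset_general G r v n S hinj hrange hconn hN
end

section
/- Let G be a connected graph, v ∈ V(G), and let S be an r-support of v such that G[T] is connected for every r-support T of v and N(v) ⊆ N[S]. Then st(S) ∩ st(v) = Ind_r(G − N[S]) * Bd(Δ^S), the join of the r-independence complex of G − N[S] with the boundary of the simplex on S. -/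
open SimpleGraph Finset CategoryTheory AlgebraicTopology

variable {V : Type} [Fintype V] [DecidableEq V]

/-!
A face `τ` of `st(S) ∩ st(v)` cannot contain `S`, since `τ ∪ {v}` would then contain the connected
`(r+1)`-set `S ∪ {v}`; and no vertex `w ∈ τ \ S` is adjacent to `S`, since `S ∪ {w}` would be a
connected `(r+1)`-set inside `S ∪ τ`. So `τ = (τ \ S) ∪ (τ ∩ S)` lies in the join.

Conversely, `r`-independence says that every connected induced subgraph has at most `r` vertices,
so it passes to unions of mutually non-adjacent sets. Since `N(v) ⊆ N[S]`, a face `σ` of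
`Ind_r(G − N[S])` has no neighbour in `S ∪ {v}`, and each of `σ ∪ B`, `S ∪ σ ∪ B`, `{v} ∪ σ ∪ B`
lies in the union of `σ` with a subset of `S ∪ {v}` of size at most `r`.
-/

namespace SimpleGraph

variable {α : Type*} {G : SimpleGraph α}

theorem Connected.induce_insert_of_adj {s : Set α} {a b : α} (hs : (G.induce s).Connected)
    (ha : a ∈ s) (hab : G.Adj b a) : (G.induce (insert b s)).Connected := by
  have hbs : insert b s = {b, a} ∪ s := by
    rw [Set.insert_union, Set.singleton_union, Set.insert_eq_of_mem ha]
  rw [hbs]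
  exact induce_union_connected (induce_pair_connected_of_adj hab).preconnected hs.preconnected
    ⟨a, by simp, ha⟩

theorem Preconnected.subset_left_of_not_adj {A B C : Set α} (hC : (G.induce C).Preconnected)
    (hCAB : C ⊆ A ∪ B) (hAB : ∀ a ∈ A, ∀ b ∈ B, ¬ G.Adj a b) {c : α} (hc : c ∈ C)
    (hcA : c ∈ A) : C ⊆ A := by
  intro x hx
  let H : (G.induce C).Subgraph := (⊤ : (G.induce C).Subgraph).induce {y | y.1 ∈ A}
  refine (hC ⟨c, hc⟩ ⟨x, hx⟩).mem_subgraphVerts (H := H) ?_ hcA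
  intro y hy z hyz
  have hzA : z.1 ∈ A := (hCAB z.2).resolve_right fun hzB => hAB y hy z hzB hyz
  exact ⟨hy, hzA, hyz⟩

theorem Connected.subset_or_subset_of_not_adj {A B C : Set α} (hC : (G.induce C).Connected)
    (hCAB : C ⊆ A ∪ B) (hAB : ∀ a ∈ A, ∀ b ∈ B, ¬ G.Adj a b) : C ⊆ A ∨ C ⊆ B := by
  obtain ⟨⟨c, hc⟩⟩ := hC.nonempty
  rcases hCAB hc with hcA | hcB
  · exact .inl (hC.preconnected.subset_left_of_not_adj hCAB hAB hc hcA)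
  · refine .inr (hC.preconnected.subset_left_of_not_adj (Set.union_comm A B ▸ hCAB) ?_ hc hcB)
    exact fun b hb a ha hba => hAB a ha b hb hba.symm

end SimpleGraph

section RIndep

variable {α : Type} {G : SimpleGraph α} {r : ℕ}

theorem isRIndep_iff_forall_connected {A : Finset α} :
    IsRIndep G r A ↔ ∀ C ⊆ (A : Set α), (G.induce C).Connected → C.ncard ≤ r := by
  constructor
  · intro h C hCA hC
    obtain ⟨⟨c, hc⟩⟩ := hC.nonempty
    have hC_comp : C ⊆ Subtype.val ''
        {w : (A : Set α) | (G.induce (A : Set α)).Reachable ⟨c, hCA hc⟩ w} := fun x hx =>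
      ⟨⟨x, hCA hx⟩, (hC.preconnected ⟨c, hc⟩ ⟨x, hx⟩).map (G.induceHomOfLE hCA).toHom, rfl⟩
    calc C.ncard ≤ _ := Set.ncard_le_ncard hC_comp (Set.toFinite _)
      _ = _ := Set.ncard_image_of_injective _ Subtype.val_injective
      _ ≤ r := h c (hCA hc)
  · intro h v hv
    let K := ((G.induce (A : Set α)).connectedComponentMk ⟨v, hv⟩).supp
    have hK : {w : (A : Set α) | (G.induce (A : Set α)).Reachable ⟨v, hv⟩ w} = K := by
      ext w
      simp only [Set.mem_ofPred_eq, K, ConnectedComponent.mem_supp_iff, ConnectedComponent.eq]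
      exact ⟨Reachable.symm, Reachable.symm⟩
    have hK_conn : (G.induce (Subtype.val '' K)).Connected :=
      (ConnectedComponent.maximal_connected_induce_supp _).1.map
        ⟨fun x : K => ⟨x.1.1, Set.mem_image_of_mem _ x.2⟩, fun hxy => hxy⟩
        (by rintro ⟨_, x, hx, rfl⟩; exact ⟨⟨x, hx⟩, rfl⟩)
    rw [hK, ← Set.ncard_image_of_injective _ Subtype.val_injective]
    exact h _ (by rintro _ ⟨x, -, rfl⟩; exact x.2) hK_conn

theorem IsRIndep.card_le_of_connected {A C : Finset α} (h : IsRIndep G r A) (hCA : C ⊆ A)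
    (hC : (G.induce (C : Set α)).Connected) : C.card ≤ r := by
  simpa using isRIndep_iff_forall_connected.mp h C (coe_subset.mpr hCA) hC

theorem IsRIndep.mono {A B : Finset α} (h : IsRIndep G r A) (hBA : B ⊆ A) : IsRIndep G r B :=
  isRIndep_iff_forall_connected.mpr fun C hCB hC =>
    isRIndep_iff_forall_connected.mp h C (hCB.trans (coe_subset.mpr hBA)) hC

theorem isRIndep_of_card_le {A : Finset α} (hA : A.card ≤ r) : IsRIndep G r A :=
  isRIndep_iff_forall_connected.mpr fun _ hCA _ =>
    (Set.ncard_le_ncard hCA (Set.toFinite _)).trans ((Set.ncard_coe_finset A).trans_le hA)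

theorem IsRIndep.union [DecidableEq α] {A B : Finset α} (hA : IsRIndep G r A) (hB : IsRIndep G r B)
    (hAB : ∀ a ∈ A, ∀ b ∈ B, ¬ G.Adj a b) : IsRIndep G r (A ∪ B) := by
  refine isRIndep_iff_forall_connected.mpr fun C hCAB hC => ?_
  rw [coe_union] at hCAB
  rcases hC.subset_or_subset_of_not_adj hCAB hAB with hCA | hCB
  · exact isRIndep_iff_forall_connected.mp hA C hCA hC
  · exact isRIndep_iff_forall_connected.mp hB C hCB hC

theorem IsRIndep.not_connected_of_lt_card {A C : Finset α} (h : IsRIndep G r A) (hCA : C ⊆ A)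
    (hC : r < C.card) : ¬ (G.induce (C : Set α)).Connected := fun hconn =>
  (h.card_le_of_connected hCA hconn).not_gt hC

end RIndep

section StarInterStar

variable {α : Type} [DecidableEq α] {G : SimpleGraph α} {r : ℕ} {v : α} {S : Finset α}

theorem not_subset_of_mem_supp {A : Finset α} (hS : S ∈ Supp G r v)
    (hvA : IsRIndep G r ({v} ∪ A)) : ¬ S ⊆ A := by
  obtain ⟨hvS, hScard, hSconn⟩ := hS
  intro hSA
  refine hvA.not_connected_of_lt_card (C := insert v S) ?_ ?_ (by rwa [coe_insert])
  · rw [← insert_eq]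
    exact insert_subset_insert v hSA
  · simp [hvS, hScard]

theorem coe_sdiff_subset_compl_closedNbhd {A : Finset α} (hScard : S.card = r)
    (hSconn : (G.induce (S : Set α)).Connected) (hSA : IsRIndep G r (S ∪ A)) :
    ((A \ S : Finset α) : Set α) ⊆ (closedNbhd G S)ᶜ := by
  rintro w hw (hwS | ⟨s, hs, hws⟩)
  · exact (mem_sdiff.mp hw).2 hwS
  · have hwS : w ∉ S := (mem_sdiff.mp hw).2
    refine hSA.not_connected_of_lt_card (C := insert w S) ?_ ?_ ?_
    · exact insert_subset (mem_union_right S (mem_sdiff.mp hw).1) subset_union_left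
    · simp [hwS, hScard]
    · rw [coe_insert]
      exact hSconn.induce_insert_of_adj hs hws

theorem starCl_inter_starCl_subset_joinCl (hS : S ∈ Supp G r v)
    (hSconn : (G.induce (S : Set α)).Connected) :
    starCl (IndCompl G r) S ∩ starCl (IndCompl G r) {v} ⊆
      joinCl (IndComplOn G r (closedNbhd G ↑S)ᶜ) {B | B ⊆ S ∧ B ≠ S} := by
  rintro A ⟨⟨hA, hSA⟩, -, hvA⟩
  refine ⟨A \ S, ⟨coe_sdiff_subset_compl_closedNbhd hS.2.1 hSconn hSA, hA.mono sdiff_subset⟩,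
    A ∩ S, ⟨inter_subset_right, fun hAS => ?_⟩, (sdiff_union_inter A S).symm⟩
  exact not_subset_of_mem_supp hS hvA (hAS ▸ inter_subset_left)

theorem joinCl_subset_starCl_inter_starCl (hScard : S.card = r)
    (hN : G.neighborSet v ⊆ closedNbhd G ↑S) :
    joinCl (IndComplOn G r (closedNbhd G ↑S)ᶜ) {B | B ⊆ S ∧ B ≠ S} ⊆
      starCl (IndCompl G r) S ∩ starCl (IndCompl G r) {v} := by
  rintro _ ⟨σ, ⟨hσN, hσ⟩, B, ⟨hBS, hBne⟩, rfl⟩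
  have hBcard : B.card < r :=
    hScard ▸ card_lt_card (Finset.ssubset_iff_subset_ne.mpr ⟨hBS, hBne⟩)
  have hsep : ∀ a ∈ σ, ∀ b ∈ insert v S, ¬ G.Adj a b := by
    intro a ha b hb hab
    apply hσN ha
    rcases mem_insert.mp hb with rfl | hbS
    · exact hN hab.symm
    · exact Or.inr ⟨b, hbS, hab⟩
  have hunion : ∀ T ⊆ insert v S, T.card ≤ r → IsRIndep G r (σ ∪ T) := fun T hT hTr =>
    hσ.union (isRIndep_of_card_le hTr) fun a ha b hb => hsep a ha b (hT hb)
  have hσB : IsRIndep G r (σ ∪ B) := hunion B (hBS.trans (subset_insert v S)) hBcard.le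
  refine ⟨⟨hσB, (hunion S (subset_insert v S) hScard.le).mono ?_⟩, hσB,
    (hunion (insert v B) (insert_subset_insert v hBS) ?_).mono ?_⟩
  · exact union_subset subset_union_right
      (union_subset subset_union_left (hBS.trans subset_union_right))
  · exact (card_insert_le v B).trans hBcard
  · rw [← insert_eq]
    exact insert_subset (mem_union_right σ (mem_insert_self v B))
      (union_subset_union subset_rfl (subset_insert v B))

end StarInterStar

theorem star_inter_star_vertex_general (G : SimpleGraph V) (r : ℕ)
    (v : V) (S : Finset V) (hS : S ∈ Supp G r v)
    (hconn : ∀ T ∈ Supp G r v, (G.induce (T : Set V)).Connected)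
    (hN : G.neighborSet v ⊆ closedNbhd G ↑S) :
    starCl (IndCompl G r) S ∩ starCl (IndCompl G r) {v} =
      joinCl (IndComplOn G r ((closedNbhd G ↑S)ᶜ)) {B | B ⊆ S ∧ B ≠ S} :=
  (starCl_inter_starCl_subset_joinCl hS (hconn S hS)).antisymm
    (joinCl_subset_starCl_inter_starCl hS.2.1 hN)

/-- `st(S) ∩ st(v) = Ind_r(G − N[S]) * Bd(Δ^S)`. -/
theorem star_inter_star_vertex (G : SimpleGraph V) (hG : G.Connected) (r : ℕ)
    (hr : 1 ≤ r) (v : V) (S : Finset V) (hS : S ∈ Supp G r v)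
    (hconn : ∀ T ∈ Supp G r v, (G.induce (T : Set V)).Connected)
    (hN : G.neighborSet v ⊆ closedNbhd G ↑S) :
    starCl (IndCompl G r) S ∩ starCl (IndCompl G r) {v} =
      joinCl (IndComplOn G r ((closedNbhd G ↑S)ᶜ)) {B | B ⊆ S ∧ B ≠ S} :=
  star_inter_star_vertex_general G r v S hS hconn hN
end
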